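/- arXiv:1809.06546 — 4 statements merged into one kernel-verified Lean document; each statement's English description precedes it below -/
import Mathlib

section
/- Let T ≥ 1 be a natural number, δ ∈ (0,1) a real constant, and ε_t > 0 for t = 1,…,T a sequence of positive reals. Define ε := ∑_{t=1}^{T} (e^{ε_t} − 1)·ε_t/(e^{ε_t} + 1) + √(2·(∑_{t=1}^{T} ε_t²)·log(1/δ)). Then √(∑_{t=1}^{T} ε_t²) ≥ (√2·ε) / (2·√(log(1/δ) + 2ε)). -/
lemma term_le_sq (x : ℝ) (hx : 0 < x) :
    (Real.exp x - 1) * x / (Real.exp x + 1) ≤ x ^ 2 := by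
  have he : 0 < Real.exp x := Real.exp_pos x
  have h1 : -x + 1 ≤ Real.exp (-x) := Real.add_one_le_exp (-x)
  have h2 : Real.exp (-x) * Real.exp x = 1 := by
    rw [← Real.exp_add]; simp
  rw [div_le_iff₀ (by linarith)]
  nlinarith [mul_pos hx he, sq_nonneg x, mul_pos (mul_pos hx hx) he]

/-- paper, Lemma on composition bounds, Setting with `log(1/δ)`:
for `T ≥ 1`, `δ ∈ (0,1)` and positives `ε_t`, if
`ε = ∑_{t=1}^T (e^{ε_t}−1)ε_t/(e^{ε_t}+1) + √(2(∑ ε_t²)·log(1/δ))`, then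
`√(∑_{t=1}^T ε_t²) ≥ √2·ε / (2·√(log(1/δ) + 2ε))`. -/
theorem sqrt_sum_sq_ge_of_composition (T : ℕ) (hT : 1 ≤ T) (δ : ℝ) (hδ0 : 0 < δ)
    (hδ1 : δ < 1) (εt : ℕ → ℝ) (hεt : ∀ t ∈ Finset.Icc 1 T, 0 < εt t) (ε : ℝ)
    (hε : ε = ∑ t ∈ Finset.Icc 1 T, (Real.exp (εt t) - 1) * εt t / (Real.exp (εt t) + 1)
        + Real.sqrt (2 * (∑ t ∈ Finset.Icc 1 T, (εt t) ^ 2) * Real.log (1 / δ))) :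
    Real.sqrt (∑ t ∈ Finset.Icc 1 T, (εt t) ^ 2) ≥
      Real.sqrt 2 * ε / (2 * Real.sqrt (Real.log (1 / δ) + 2 * ε)) := by
  set S := ∑ t ∈ Finset.Icc 1 T, (εt t) ^ 2 with hSdef
  set A := ∑ t ∈ Finset.Icc 1 T, (Real.exp (εt t) - 1) * εt t / (Real.exp (εt t) + 1) with hAdef
  set L := Real.log (1 / δ) with hLdef
  have hL : 0 < L := Real.log_pos (one_lt_one_div hδ0 hδ1)
  have hS : 0 < S := by
    apply Finset.sum_pos' (fun t _ => sq_nonneg _) ⟨1, by simp [hT], _⟩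
    exact pow_pos (hεt 1 (by simp [hT])) 2
  have hA0 : 0 ≤ A := by
    apply Finset.sum_nonneg
    intro t ht
    have hx := hεt t ht
    have he : 1 ≤ Real.exp (εt t) := Real.one_le_exp hx.le
    apply div_nonneg (mul_nonneg (by linarith) hx.le) (by linarith)
  have hAS : A ≤ S := Finset.sum_le_sum (fun t ht => term_le_sq (εt t) (hεt t ht))
  set B := Real.sqrt (2 * S * L) with hBdef
  have hB0 : 0 ≤ B := Real.sqrt_nonneg _
  have hB2 : B ^ 2 = 2 * S * L := Real.sq_sqrt (by positivity)
  have hε0 : 0 ≤ ε := by rw [hε]; positivity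
  have hkey : 2 * ε ^ 2 ≤ 4 * S * (L + 2 * ε) := by
    have : ε = A + B := hε
    nlinarith [mul_nonneg hA0 hB0, mul_nonneg hS.le hB0, mul_nonneg hA0 hA0]
  rw [ge_iff_le, div_le_iff₀ (by positivity)]
  have h1 : Real.sqrt 2 * ε = Real.sqrt (2 * ε ^ 2) := by
    rw [Real.sqrt_mul (by norm_num), Real.sqrt_sq hε0]
  have h2 : Real.sqrt S * (2 * Real.sqrt (L + 2 * ε)) = Real.sqrt (4 * S * (L + 2 * ε)) := by
    rw [show (4 : ℝ) * S * (L + 2 * ε) = S * (4 * (L + 2 * ε)) by ring,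
      Real.sqrt_mul hS.le, Real.sqrt_mul (by norm_num : (0:ℝ) ≤ 4),
      show Real.sqrt 4 = 2 by
        rw [show (4:ℝ) = 2 ^ 2 by norm_num, Real.sqrt_sq (by norm_num)]]
  rw [h1, h2]
  exact Real.sqrt_le_sqrt hkey
end

section
/- For every real number α with −1/2 < α < 2, one has (α/2 − 1)²·√(2α + 1) ≤ 1, and equality holds at α = 0. (Hence the function α ↦ (α/2 − 1)²·√(2α+1) on (−1/2, 2), which governs the non-accelerated convex utility bound, is maximized at α = 0 with maximum value 1.) -/
/-- paper: budget allocation, non-accelerated convex case: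
for every real `α` with `−1/2 < α < 2`, `(α/2 − 1)²·√(2α+1) ≤ 1`, with equality
at `α = 0`. -/
theorem budget_nonacc_convex_max :
    (∀ α : ℝ, -1 / 2 < α → α < 2 → (α / 2 - 1) ^ 2 * Real.sqrt (2 * α + 1) ≤ 1) ∧
    ((0 : ℝ) / 2 - 1) ^ 2 * Real.sqrt (2 * 0 + 1) = 1 := by
  constructor
  · intro α h1 h2
    set s := Real.sqrt (2 * α + 1) with hs
    have hs0 : 0 ≤ s := Real.sqrt_nonneg _
    have hs2 : s ^ 2 = 2 * α + 1 := Real.sq_sqrt (by linarith)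
    nlinarith [sq_nonneg ((α / 2 - 1) ^ 2 * s - 1), sq_nonneg ((α / 2 - 1) ^ 2 * s + 1),
      sq_nonneg (α / 2 - 1), sq_nonneg α, sq_nonneg (s - 1), sq_nonneg (α * (s - 1)),
      mul_nonneg hs0 (sq_nonneg α), mul_nonneg hs0 (sq_nonneg (α / 2 - 1))]
  · norm_num
end

section
/- For every real number α with −1/2 < α < 4, one has (α/2 − 2)²·√(2α + 1) ≤ (81/25)·√(9/5), and equality holds at α = 2/5. (Hence the function α ↦ (α/2 − 2)²·√(2α+1) on (−1/2, 4), which governs the accelerated convex utility bound, is maximized at α = 2/5.) -/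
/-- paper: budget allocation, accelerated convex case:
for every real `α` with `−1/2 < α < 4`, `(α/2 − 2)²·√(2α+1) ≤ (81/25)·√(9/5)`,
with equality at `α = 2/5`. -/
theorem budget_acc_convex_max :
    (∀ α : ℝ, -1 / 2 < α → α < 4 →
      (α / 2 - 2) ^ 2 * Real.sqrt (2 * α + 1) ≤ 81 / 25 * Real.sqrt (9 / 5)) ∧
    ((2 / 5 : ℝ) / 2 - 2) ^ 2 * Real.sqrt (2 * (2 / 5) + 1) =
      81 / 25 * Real.sqrt (9 / 5) := by
  constructor
  · intro α h1 h2
    have hx : (0:ℝ) ≤ 2 * α + 1 := by linarith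
    have hL : (α / 2 - 2) ^ 2 * Real.sqrt (2 * α + 1)
        = Real.sqrt ((α / 2 - 2) ^ 4 * (2 * α + 1)) := by
      rw [Real.sqrt_mul (by positivity), show (α/2-2)^4 = ((α/2-2)^2)^2 by ring,
        Real.sqrt_sq (by positivity)]
    have hR : (81 / 25 : ℝ) * Real.sqrt (9 / 5)
        = Real.sqrt ((81/25)^2 * (9/5)) := by
      rw [Real.sqrt_mul (by positivity), Real.sqrt_sq (by norm_num)]
    rw [hL, hR]
    apply Real.sqrt_le_sqrt
    nlinarith [sq_nonneg (α - 2/5), sq_nonneg ((α - 2/5) * (α - 4)),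
      sq_nonneg ((α - 2/5) * (α - 4)^2), mul_nonneg (sq_nonneg (α - 2/5)) hx,
      sq_nonneg (α - 4)]
  · have : 2 * (2/5 : ℝ) + 1 = 9/5 := by norm_num
    rw [this]
    norm_num
end

section
/- Let C be a real d×m matrix, η > 0 and λ > 0 real constants, and let E be a real d×d matrix with nonnegative diagonal entries E_{jj} ≥ 0. Let Σ₀ = C·Cᵀ, so Σ_{jj,0} = ‖C^j‖₂² where C^j is the j-th row of C. Define the diagonal d×d matrix S by S_{jj} = max(0, 1 − ηλ/√(Σ_{jj,0} + E_{jj})) (with S_{jj} = 0 if Σ_{jj,0} + E_{jj} = 0), and set Ŵ = S·C. Let r = #{ j : C^j ≠ 0 } and k = #{ j : Σ_{jj,0} ≥ η²λ² }. Then the suboptimality of Ŵ for the group-sparse proximal objective satisfies: (1/(2η))·‖Ŵ − C‖_F² + λ·‖Ŵ‖_{2,1} − inf_{W ∈ ℝ^{d×m}} [ (1/(2η))·‖W − C‖_F² + λ·‖W‖_{2,1} ] ≤ (1/η)·[ (r/(ηλ))·(max_{j} ‖C^j‖₂)² + max_{j} ‖C^j‖₂ ] · [ (k/(2ηλ))·max_{j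 : Σ_{jj,0} ≥ η²λ²} E_{jj} + max(0, r − k)·max_{j : Σ_{jj,0} < η²λ²} √(E_{jj}) ], where each maximum over an empty index set is interpreted as 0 (its multiplying factor then vanishes). -/
open scoped BigOperators

/-- Frobenius norm of a real `d×m` matrix: `√(∑_{j,i} X_{ji}²)`. -/
noncomputable def frobNorm {d m : ℕ} (X : Matrix (Fin d) (Fin m) ℝ) : ℝ :=
  Real.sqrt (∑ j : Fin d, ∑ i : Fin m, (X j i) ^ 2)

/-- `ℓ_{2,1}` norm of a real `d×m` matrix: sum of Euclidean norms of its rows. -/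
noncomputable def l21Norm {d m : ℕ} (X : Matrix (Fin d) (Fin m) ℝ) : ℝ :=
  ∑ j : Fin d, Real.sqrt (∑ i : Fin m, (X j i) ^ 2)

/-- Euclidean norm of the `j`-th row of a real `d×m` matrix. -/
noncomputable def rowNorm {d m : ℕ} (X : Matrix (Fin d) (Fin m) ℝ) (j : Fin d) : ℝ :=
  Real.sqrt (∑ i : Fin m, (X j i) ^ 2)

/-!
The objective separates over rows, and on a row `c` it is `w ↦ ‖w - c‖² / (2η) + λ‖w‖`. By the
reverse triangle inequality this is bounded below by a parabola in `‖w‖`, and on multiples of `c`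
it equals that parabola, so the exact minimiser is the soft-thresholded row
`max(0, 1 - ηλ/‖c‖) • c`. The noisy step also rescales each row, hence its excess is a gap between
two values of the parabola. With `a = ‖c‖` and `b = √(a² + e)`: if `a ≥ ηλ` the gap is
`(ηλ (b - a) / b)² / (2η) ≤ e / (4η)`; if `a < ηλ` the exact step is `0`, the noisy factor is at
most `√e / (ηλ)`, and the gap is at most `a √e / η`. Summing over the `k` long rows and the `r - k`
short nonzero rows, and bounding `a` by `max_j ‖C^j‖`, gives the claim.
-/
noncomputable section

def proxObjective {V : Type*} [SeminormedAddCommGroup V] (η lam : ℝ) (c w : V) : ℝ :=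
  1 / (2 * η) * ‖w - c‖ ^ 2 + lam * ‖w‖

def proxProfile (η lam a u : ℝ) : ℝ := 1 / (2 * η) * (u - a) ^ 2 + lam * u

def noisyShrink (η lam v : ℝ) : ℝ := if v = 0 then 0 else max 0 (1 - η * lam / √v)

section Prox

variable {V : Type*} [SeminormedAddCommGroup V] {η lam : ℝ}

theorem proxProfile_norm_le_proxObjective (hη : 0 ≤ η) (c w : V) :
    proxProfile η lam ‖c‖ ‖w‖ ≤ proxObjective η lam c w := by
  have h : (‖w‖ - ‖c‖) ^ 2 ≤ ‖w - c‖ ^ 2 := by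
    simpa only [sq_abs] using pow_le_pow_left₀ (abs_nonneg _) (abs_norm_sub_norm_le w c) 2
  unfold proxProfile proxObjective
  gcongr

theorem proxObjective_smul_self [NormedSpace ℝ V] {t : ℝ} (ht : 0 ≤ t) (c : V) :
    proxObjective η lam c (t • c) = proxProfile η lam ‖c‖ (t * ‖c‖) := by
  have h : t • c - c = (t - 1) • c := by rw [sub_smul, one_smul]
  rw [proxObjective, proxProfile, h, norm_smul, norm_smul, Real.norm_eq_abs, Real.norm_eq_abs,
    abs_of_nonneg ht, mul_pow, sq_abs]
  ring

theorem proxProfile_softThreshold_le (hη : 0 < η) {a u : ℝ} (hu : 0 ≤ u) :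
    proxProfile η lam a (max 0 (a - η * lam)) ≤ proxProfile η lam a u := by
  unfold proxProfile
  rcases le_total a (η * lam) with h | h
  · rw [max_eq_left (by linarith)]
    have hgap : 1 / (2 * η) * (u - a) ^ 2 + lam * u - (1 / (2 * η) * (0 - a) ^ 2 + lam * 0)
        = 1 / (2 * η) * (u * (u - 2 * a + 2 * η * lam)) := by
      field_simp; ring
    have : 0 ≤ 1 / (2 * η) * (u * (u - 2 * a + 2 * η * lam)) := by
      have := mul_nonneg hu (by linarith : (0:ℝ) ≤ u - 2 * a + 2 * η * lam)
      positivity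
    linarith
  · rw [max_eq_right (by linarith)]
    have hgap : 1 / (2 * η) * (u - a) ^ 2 + lam * u
        - (1 / (2 * η) * (a - η * lam - a) ^ 2 + lam * (a - η * lam))
        = 1 / (2 * η) * (u - a + η * lam) ^ 2 := by
      field_simp; ring
    have : 0 ≤ 1 / (2 * η) * (u - a + η * lam) ^ 2 := by positivity
    linarith

theorem max_zero_one_sub_div_mul_self (hηlam : 0 ≤ η * lam) {a : ℝ} (ha : 0 ≤ a) :
    max 0 (1 - η * lam / a) * a = max 0 (a - η * lam) := by
  rcases ha.eq_or_lt with rfl | ha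
  · simp [hηlam]
  · rw [max_mul_of_nonneg _ _ ha.le, zero_mul, sub_mul, one_mul, div_mul_cancel₀ _ ha.ne']

theorem proxObjective_softThreshold_le [NormedSpace ℝ V] (hη : 0 < η) (hlam : 0 ≤ lam) (c w : V) :
    proxObjective η lam c (max 0 (1 - η * lam / ‖c‖) • c) ≤ proxObjective η lam c w := by
  rw [proxObjective_smul_self (le_max_left _ _), max_zero_one_sub_div_mul_self (by positivity) (norm_nonneg c)]
  exact (proxProfile_softThreshold_le hη (norm_nonneg w)).trans
    (proxProfile_norm_le_proxObjective hη.le c w)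

end Prox

section Noisy

variable {η lam : ℝ}

theorem noisyShrink_nonneg (v : ℝ) : 0 ≤ noisyShrink η lam v := by
  unfold noisyShrink; split_ifs <;> simp

theorem noisyShrink_le_one (hηlam : 0 ≤ η * lam) (v : ℝ) : noisyShrink η lam v ≤ 1 := by
  unfold noisyShrink
  split_ifs
  · exact zero_le_one
  · exact max_le zero_le_one (sub_le_self _ (by positivity))

theorem proxProfile_noisyShrink_sub_le_of_le (hη : 0 < η) (hlam : 0 < lam) {a e : ℝ}
    (ha : η * lam ≤ a) (he : 0 ≤ e) :
    proxProfile η lam a (noisyShrink η lam (a ^ 2 + e) * a) - proxProfile η lam a (a - η * lam)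
      ≤ e / (4 * η) := by
  have hx : 0 < η * lam := mul_pos hη hlam
  have ha0 : 0 < a := hx.trans_le ha
  set b := √(a ^ 2 + e)
  have hb2 : b ^ 2 = a ^ 2 + e := Real.sq_sqrt (by positivity)
  have hab : a ≤ b := Real.le_sqrt_of_sq_le (by linarith)
  have hb0 : 0 < b := by linarith
  have hs : noisyShrink η lam (a ^ 2 + e) = 1 - η * lam / b := by
    rw [noisyShrink, if_neg (by positivity : 0 < a ^ 2 + e).ne', max_eq_right]
    rw [sub_nonneg, div_le_one hb0]; linarith
  have hexcess : proxProfile η lam a (noisyShrink η lam (a ^ 2 + e) * a)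
      - proxProfile η lam a (a - η * lam) = 1 / (2 * η) * (η * lam * (b - a) / b) ^ 2 := by
    rw [hs, proxProfile, proxProfile]; field_simp; ring
  have hgap : (η * lam * (b - a) / b) ^ 2 ≤ e / 2 := by
    have h1 : η * lam * (b - a) / b ≤ b - a := by
      rw [div_le_iff₀ hb0]; nlinarith
    have h2 : 0 ≤ η * lam * (b - a) / b := by have := sub_nonneg.2 hab; positivity
    have h3 : η * lam * (b - a) / b * (b - a) ≤ η * lam * (b - a) := by
      rw [div_mul_eq_mul_div, div_le_iff₀ hb0]
      nlinarith [mul_nonneg hx.le (sub_nonneg.2 hab)]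
    nlinarith
  rw [hexcess]
  calc 1 / (2 * η) * (η * lam * (b - a) / b) ^ 2 ≤ 1 / (2 * η) * (e / 2) := by gcongr
    _ = e / (4 * η) := by field_simp; ring

theorem noisyShrink_sq_add_le_sqrt_div (hη : 0 < η) (hlam : 0 < lam) {a e : ℝ} (ha : 0 ≤ a)
    (hal : a ≤ η * lam) (he : 0 ≤ e) : noisyShrink η lam (a ^ 2 + e) ≤ √e / (η * lam) := by
  have hx : 0 < η * lam := mul_pos hη hlam
  unfold noisyShrink
  split_ifs with hv
  · positivity
  refine max_le (by positivity) ?_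
  have hb : √(a ^ 2 + e) ≤ a + √e := by
    rw [Real.sqrt_le_left (by positivity)]
    nlinarith [Real.sq_sqrt he, Real.sqrt_nonneg e]
  have hb0 : 0 < √(a ^ 2 + e) := Real.sqrt_pos.2 (lt_of_le_of_ne (by positivity) (Ne.symm hv))
  rcases le_total (√(a ^ 2 + e)) (η * lam) with h | h
  · have : 1 - η * lam / √(a ^ 2 + e) ≤ 0 := by rw [sub_nonpos, one_le_div hb0]; exact h
    exact this.trans (by positivity)
  · rw [one_sub_div hb0.ne', div_le_div_iff₀ hb0 hx]
    nlinarith [Real.sqrt_nonneg e]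

theorem proxProfile_noisyShrink_sub_le_of_lt (hη : 0 < η) (hlam : 0 < lam) {a e : ℝ} (ha : 0 ≤ a)
    (hal : a < η * lam) (he : 0 ≤ e) :
    proxProfile η lam a (noisyShrink η lam (a ^ 2 + e) * a) - proxProfile η lam a 0
      ≤ a * √e / η := by
  set s := noisyShrink η lam (a ^ 2 + e)
  have hs0 : 0 ≤ s := noisyShrink_nonneg _
  have hs1 : s ≤ 1 := noisyShrink_le_one (by positivity) _
  have hsE : s ≤ √e / (η * lam) := noisyShrink_sq_add_le_sqrt_div hη hlam ha hal.le he
  have hexcess : proxProfile η lam a (s * a) - proxProfile η lam a 0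
      = s * (lam * a) + a ^ 2 / (2 * η) * (s * (s - 2)) := by
    rw [proxProfile, proxProfile]; field_simp; ring
  have hneg : a ^ 2 / (2 * η) * (s * (s - 2)) ≤ 0 :=
    mul_nonpos_of_nonneg_of_nonpos (by positivity) (mul_nonpos_of_nonneg_of_nonpos hs0 (by linarith))
  calc proxProfile η lam a (s * a) - proxProfile η lam a 0 ≤ s * (lam * a) := by linarith
    _ ≤ √e / (η * lam) * (lam * a) := by gcongr
    _ = a * √e / η := by field_simp

end Noisy

theorem proxObjective_noisyShrink_sub_le {V : Type*} [SeminormedAddCommGroup V] [NormedSpace ℝ V]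
    {η lam : ℝ} (hη : 0 < η) (hlam : 0 < lam) (c : V) {e : ℝ} (he : 0 ≤ e) :
    proxObjective η lam c (noisyShrink η lam (‖c‖ ^ 2 + e) • c)
        - proxObjective η lam c (max 0 (1 - η * lam / ‖c‖) • c)
      ≤ ‖c‖ * (if η * lam ≤ ‖c‖ then e / (4 * η * lam) else √e) / η := by
  rw [proxObjective_smul_self (noisyShrink_nonneg _), proxObjective_smul_self (le_max_left _ _),
    max_zero_one_sub_div_mul_self (by positivity) (norm_nonneg c)]
  split_ifs with h
  · rw [max_eq_right (sub_nonneg.2 h)]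
    calc _ ≤ e / (4 * η) := proxProfile_noisyShrink_sub_le_of_le hη hlam h he
      _ = η * lam * (e / (4 * η * lam)) / η := by field_simp
      _ ≤ ‖c‖ * (e / (4 * η * lam)) / η := by gcongr
  · rw [max_eq_left (sub_nonpos.2 (not_le.1 h).le)]
    exact proxProfile_noisyShrink_sub_le_of_lt hη hlam (norm_nonneg c) (not_le.1 h) he

theorem Real.iSup_div_of_nonneg {ι : Sort*} {c : ℝ} (hc : 0 ≤ c) (f : ι → ℝ) :
    (⨆ i, f i / c) = (⨆ i, f i) / c := by
  simp only [div_eq_mul_inv]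
  exact (Real.iSup_mul_of_nonneg (inv_nonneg.2 hc) f).symm

theorem Finset.sum_le_card_mul_iSup {ι : Type*} [Finite ι] {p : ι → Prop} (f : ι → ℝ)
    (s : Finset ι) (hs : ∀ j ∈ s, p j) : ∑ j ∈ s, f j ≤ s.card * ⨆ j : {j // p j}, f j := by
  rw [← nsmul_eq_mul]
  exact Finset.sum_le_card_nsmul _ _ _ fun j hj =>
    le_ciSup (f := fun j : {j // p j} => f j) (Set.finite_range _).bddAbove ⟨j, hs j hj⟩

theorem sum_mul_ite_le {ι : Type*} [Fintype ι] {P q p : ι → Prop} [DecidablePred q]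
    {a f g : ι → ℝ} {M : ℝ} (hM : 0 ≤ M) (haM : ∀ j, a j ≤ M) (haP : ∀ j, ¬ P j → a j = 0)
    (hqP : ∀ j, q j → P j) (hp : ∀ j, ¬ q j → p j) (hf : ∀ j, 0 ≤ f j) (hg : ∀ j, 0 ≤ g j) :
    ∑ j, a j * (if q j then f j else g j) ≤
      M * (Nat.card {j // q j} * (⨆ j : {j // q j}, f j) +
        ((Nat.card {j // P j} : ℝ) - Nat.card {j // q j}) * ⨆ j : {j // p j}, g j) := by
  classical
  set K := Finset.univ.filter q
  set R := Finset.univ.filter P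
  have hKR : K ⊆ R := Finset.monotone_filter_right _ fun j _ => hqP j
  have hcard (r : ι → Prop) [DecidablePred r] :
      Nat.card {j // r j} = (Finset.univ.filter r).card := by
    rw [Nat.card_eq_fintype_card, Fintype.card_subtype]
  calc ∑ j, a j * (if q j then f j else g j)
      = ∑ j ∈ R, a j * (if q j then f j else g j) :=
        (Finset.sum_filter_of_ne fun j _ hj => by_contra fun hP => hj (by simp [haP j hP])).symm
    _ ≤ ∑ j ∈ R, M * (if q j then f j else g j) := by
        gcongr with j
        · split_ifs; exacts [hf j, hg j]
        · exact haM j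
    _ = M * (∑ j ∈ K, f j + ∑ j ∈ R \ K, g j) := by
        rw [← Finset.mul_sum, ← Finset.sum_sdiff hKR, add_comm]
        congr 2
        · exact Finset.sum_congr rfl fun j hj => if_pos (Finset.mem_filter.1 hj).2
        · exact Finset.sum_congr rfl fun j hj =>
            if_neg fun hq => (Finset.mem_sdiff.1 hj).2 (Finset.mem_filter.2 ⟨Finset.mem_univ _, hq⟩)
    _ ≤ M * (K.card * (⨆ j : {j // q j}, f j) + (R \ K).card * ⨆ j : {j // p j}, g j) := by
        gcongr
        · exact Finset.sum_le_card_mul_iSup _ _ fun j hj => (Finset.mem_filter.1 hj).2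
        · exact Finset.sum_le_card_mul_iSup _ _ fun j hj =>
            hp j fun hq => (Finset.mem_sdiff.1 hj).2 (Finset.mem_filter.2 ⟨Finset.mem_univ _, hq⟩)
    _ = _ := by
        rw [Finset.card_sdiff_of_subset hKR, Nat.cast_sub (Finset.card_le_card hKR), hcard q,
          hcard P]

section Matrix

variable {d m : ℕ}

def rowVec (X : Matrix (Fin d) (Fin m) ℝ) (j : Fin d) : EuclideanSpace ℝ (Fin m) :=
  WithLp.toLp 2 (X j)

theorem norm_rowVec (X : Matrix (Fin d) (Fin m) ℝ) (j : Fin d) : ‖rowVec X j‖ = rowNorm X j := by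
  simp [rowVec, rowNorm, EuclideanSpace.norm_eq]

theorem rowVec_sub (X Y : Matrix (Fin d) (Fin m) ℝ) (j : Fin d) :
    rowVec (X - Y) j = rowVec X j - rowVec Y j := rfl

theorem rowVec_diagonal_mul (s : Fin d → ℝ) (X : Matrix (Fin d) (Fin m) ℝ) (j : Fin d) :
    rowVec (Matrix.diagonal s * X) j = s j • rowVec X j := by
  ext i; simp [rowVec, Matrix.diagonal_mul]

theorem frobNorm_sq (X : Matrix (Fin d) (Fin m) ℝ) : frobNorm X ^ 2 = ∑ j, rowNorm X j ^ 2 := by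
  rw [frobNorm, Real.sq_sqrt (by positivity)]
  exact Finset.sum_congr rfl fun j _ => (Real.sq_sqrt (by positivity)).symm

theorem l21Norm_eq_sum (X : Matrix (Fin d) (Fin m) ℝ) : l21Norm X = ∑ j, rowNorm X j := rfl

theorem mul_transpose_apply_self (X : Matrix (Fin d) (Fin m) ℝ) (j : Fin d) :
    (X * X.transpose) j j = rowNorm X j ^ 2 := by
  rw [rowNorm, Real.sq_sqrt (by positivity)]
  simp [Matrix.mul_apply, sq]

theorem rowNorm_eq_zero_of_forall {X : Matrix (Fin d) (Fin m) ℝ} {j : Fin d}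
    (h : ∀ i, X j i = 0) : rowNorm X j = 0 := by
  simp [rowNorm, h]

theorem proxMatrixObjective_eq_sum (η lam : ℝ) (C W : Matrix (Fin d) (Fin m) ℝ) :
    1 / (2 * η) * frobNorm (W - C) ^ 2 + lam * l21Norm W
      = ∑ j, proxObjective η lam (rowVec C j) (rowVec W j) := by
  simp only [proxObjective, ← rowVec_sub, norm_rowVec, frobNorm_sq, l21Norm_eq_sum, Finset.mul_sum,
    Finset.sum_add_distrib]

theorem proxMatrixObjective_sub_iInf_le {η lam : ℝ} (hη : 0 < η) (hlam : 0 ≤ lam)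
    (C W₀ : Matrix (Fin d) (Fin m) ℝ) :
    1 / (2 * η) * frobNorm (W₀ - C) ^ 2 + lam * l21Norm W₀
        - ⨅ W : Matrix (Fin d) (Fin m) ℝ, 1 / (2 * η) * frobNorm (W - C) ^ 2 + lam * l21Norm W
      ≤ ∑ j, (proxObjective η lam (rowVec C j) (rowVec W₀ j)
          - proxObjective η lam (rowVec C j) (max 0 (1 - η * lam / ‖rowVec C j‖) • rowVec C j)) := by
  simp only [proxMatrixObjective_eq_sum, Finset.sum_sub_distrib]
  exact sub_le_sub_left
    (le_ciInf fun W => Finset.sum_le_sum fun j _ => proxObjective_softThreshold_le hη hlam _ _) _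

theorem proxObjective_rowVec_noisyShrink_sub_le {η lam : ℝ} (hη : 0 < η) (hlam : 0 < lam)
    (C : Matrix (Fin d) (Fin m) ℝ) (j : Fin d) {e : ℝ} (he : 0 ≤ e) :
    proxObjective η lam (rowVec C j)
          (noisyShrink η lam ((C * C.transpose) j j + e) • rowVec C j)
        - proxObjective η lam (rowVec C j) (max 0 (1 - η * lam / ‖rowVec C j‖) • rowVec C j)
      ≤ rowNorm C j * (if η ^ 2 * lam ^ 2 ≤ (C * C.transpose) j j
          then e / (4 * η * lam) else √e) / η := by
  have hthreshold : η ^ 2 * lam ^ 2 ≤ (C * C.transpose) j j ↔ η * lam ≤ rowNorm C j := by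
    rw [mul_transpose_apply_self, ← mul_pow]
    exact sq_le_sq₀ (by positivity) (Real.sqrt_nonneg _)
  simp only [hthreshold]
  rw [mul_transpose_apply_self, ← norm_rowVec]
  exact proxObjective_noisyShrink_sub_le hη hlam (rowVec C j) he

theorem sum_rowNorm_mul_ite_le {τ : ℝ} (hτ : 0 < τ) (C : Matrix (Fin d) (Fin m) ℝ)
    {f g : Fin d → ℝ} (hf : ∀ j, 0 ≤ f j) (hg : ∀ j, 0 ≤ g j) :
    ∑ j, rowNorm C j * (if τ ≤ (C * C.transpose) j j then f j else g j) ≤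
      (⨆ j, rowNorm C j) * (Nat.card {j // τ ≤ (C * C.transpose) j j} *
          (⨆ j : {j // τ ≤ (C * C.transpose) j j}, f j) +
        ((Nat.card {j // ∃ i, C j i ≠ 0} : ℝ) - Nat.card {j // τ ≤ (C * C.transpose) j j}) *
          ⨆ j : {j // (C * C.transpose) j j < τ}, g j) := by
  refine sum_mul_ite_le (Real.iSup_nonneg fun j => Real.sqrt_nonneg _)
    (fun j => le_ciSup (Set.finite_range _).bddAbove j)
    (fun j hj => rowNorm_eq_zero_of_forall (not_exists_not.1 hj)) (fun j hj => ?_)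
    (fun j hj => not_le.1 hj) hf hg
  by_contra hC
  rw [mul_transpose_apply_self, rowNorm_eq_zero_of_forall (not_exists_not.1 hC)] at hj
  exact absurd hj (by simpa using hτ)

end Matrix

end

/-- paper, one-iteration utility lemma for the group-sparse
(ℓ_{2,1}-regularized) model-protected proximal step: with `Σ₀ = C·Cᵀ`, the
perturbed soft-thresholding matrix `Ŵ = S·C` (where
`S_{jj} = max(0, 1 − ηλ/√(Σ_{jj,0}+E_{jj}))`, set to `0` when `Σ_{jj,0}+E_{jj}=0`),
`r = #{j : C^j ≠ 0}` and `k = #{j : Σ_{jj,0} ≥ η²λ²}`, the excess of the proximal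
objective at `Ŵ` over its infimum is bounded by
`(1/η)·[(r/(ηλ))·(max_j‖C^j‖₂)² + max_j‖C^j‖₂]·[(k/(2ηλ))·max_{j:Σ_{jj,0}≥η²λ²}E_{jj}
 + max(0, r−k)·max_{j:Σ_{jj,0}<η²λ²}√E_{jj}]`,
where maxima over empty index sets are `0` (encoded via real-valued `⨆` over a
possibly empty subtype, which is `0` in `ℝ`). -/
theorem group_sparse_noisy_prox_utility (d m : ℕ) (η lam : ℝ) (hη : 0 < η)
    (hlam : 0 < lam) (C : Matrix (Fin d) (Fin m) ℝ) (E : Matrix (Fin d) (Fin d) ℝ)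
    (hE : ∀ j : Fin d, 0 ≤ E j j)
    (S : Matrix (Fin d) (Fin d) ℝ)
    (hSdiag : ∀ j j' : Fin d, j ≠ j' → S j j' = 0)
    (hS : ∀ j : Fin d,
      S j j = if (C * C.transpose) j j + E j j = 0 then 0
        else max 0 (1 - η * lam / Real.sqrt ((C * C.transpose) j j + E j j)))
    (What : Matrix (Fin d) (Fin m) ℝ) (hWhat : What = S * C)
    (r k : ℕ)
    (hr : r = Nat.card {j : Fin d // ∃ i : Fin m, C j i ≠ 0})
    (hk : k = Nat.card {j : Fin d // η ^ 2 * lam ^ 2 ≤ (C * C.transpose) j j}) :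
    (1 / (2 * η)) * frobNorm (What - C) ^ 2 + lam * l21Norm What -
        (⨅ W : Matrix (Fin d) (Fin m) ℝ,
          (1 / (2 * η)) * frobNorm (W - C) ^ 2 + lam * l21Norm W) ≤
      (1 / η) *
        ((r / (η * lam)) * (⨆ j : Fin d, rowNorm C j) ^ 2 + ⨆ j : Fin d, rowNorm C j) *
        ((k / (2 * η * lam)) *
            (⨆ j : {j : Fin d // η ^ 2 * lam ^ 2 ≤ (C * C.transpose) j j}, E j j) +
          max 0 ((r : ℝ) - (k : ℝ)) *
            (⨆ j : {j : Fin d // (C * C.transpose) j j < η ^ 2 * lam ^ 2},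
              Real.sqrt (E j j))) := by
  have hSC : What = Matrix.diagonal S.diag * C := by
    rw [hWhat, Matrix.IsDiag.diagonal_diag fun i j h => hSdiag i j h]
  set M := ⨆ j, rowNorm C j
  set ME := ⨆ j : {j : Fin d // η ^ 2 * lam ^ 2 ≤ (C * C.transpose) j j}, E j j
  set MS := ⨆ j : {j : Fin d // (C * C.transpose) j j < η ^ 2 * lam ^ 2}, √(E j j)
  have hM : 0 ≤ M := Real.iSup_nonneg fun j => Real.sqrt_nonneg _
  have hME : 0 ≤ ME := Real.iSup_nonneg fun j => hE j
  have hMS : 0 ≤ MS := Real.iSup_nonneg fun j => Real.sqrt_nonneg _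
  refine (proxMatrixObjective_sub_iInf_le hη hlam.le C What).trans ?_
  calc _ ≤ ∑ j, rowNorm C j * (if η ^ 2 * lam ^ 2 ≤ (C * C.transpose) j j
            then E j j / (4 * η * lam) else √(E j j)) / η := Finset.sum_le_sum fun j _ => by
        rw [hSC, rowVec_diagonal_mul, Matrix.diag_apply, hS j]
        exact proxObjective_rowVec_noisyShrink_sub_le hη hlam C j (hE j)
    _ ≤ M * (k * (ME / (4 * η * lam)) + ((r : ℝ) - k) * MS) / η := by
        rw [← Finset.sum_div, hr, hk, ← Real.iSup_div_of_nonneg (by positivity)]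
        gcongr
        exact sum_rowNorm_mul_ite_le (by positivity) C (fun j => by have := hE j; positivity)
          fun j => Real.sqrt_nonneg _
    _ = 1 / η * M * (k / (4 * η * lam) * ME + ((r : ℝ) - k) * MS) := by ring
    _ ≤ 1 / η * M * (k / (2 * η * lam) * ME + max 0 ((r : ℝ) - k) * MS) := by
        gcongr
        · norm_num
        · exact le_max_right _ _
    _ ≤ _ := by
        gcongr
        exact le_add_of_nonneg_left (by positivity)
end
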